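/- arXiv:1410.6382 — 3 statements merged into one kernel-verified Lean document; each statement's English description precedes it below -/
import Mathlib

section
/- Let X be a real-valued random variable with |E[X]| <= C/2 for some C > 0, and define the clipped variable \bar{X} = max(min(X, C), -C). Then |E[\bar{X}] - E[X]| <= 2*Var(X)/C. -/
open MeasureTheory ProbabilityTheory

/-- Clipping bias bound: if `X` is a real random variable with `|E[X]| ≤ C/2` for `C > 0`,
and `X̄ = max (min X C) (-C)` is the clipped variable, then
`|E[X̄] - E[X]| ≤ 2 Var(X) / C`. -/
theorem stmt_6 {Ω : Type*} [MeasureSpace Ω] [IsProbabilityMeasure (ℙ : Measure Ω)]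
    (X : Ω → ℝ) (hX : MemLp X 2 ℙ) (C : ℝ) (hC : 0 < C)
    (hmean : |∫ ω, X ω ∂ℙ| ≤ C / 2) :
    |(∫ ω, max (min (X ω) C) (-C) ∂ℙ) - ∫ ω, X ω ∂ℙ|
      ≤ 2 * variance X ℙ / C := by
  set μ := ∫ ω, X ω ∂ℙ with hμ
  have hXi : Integrable X ℙ := hX.integrable (by norm_num)
  have hsq : Integrable (fun ω => (X ω - μ) ^ 2) ℙ := by
    have := (hX.sub (memLp_const μ)).integrable_sq
    simpa using this
  have hclip : Integrable (fun ω => max (min (X ω) C) (-C)) ℙ :=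
    (hXi.inf (integrable_const C)).sup (integrable_const (-C))
  have hμbnd : -(C/2) ≤ μ ∧ μ ≤ C/2 := abs_le.mp hmean
  have key : ∀ x : ℝ, |max (min x C) (-C) - x| ≤ 2 * (x - μ) ^ 2 / C := by
    intro x
    rcases le_or_gt x (-C) with h1 | h1
    · have hmin : min x C = x := min_eq_left (h1.trans (by linarith))
      rw [hmin, max_eq_right h1, abs_of_nonneg (by linarith)]
      rw [le_div_iff₀ hC]
      nlinarith [hμbnd.1, hμbnd.2]
    rcases le_or_gt C x with h2 | h2
    · have hmin : min x C = C := min_eq_right h2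
      rw [hmin, max_eq_left (by linarith), abs_of_nonpos (by linarith)]
      rw [le_div_iff₀ hC]
      nlinarith [hμbnd.1, hμbnd.2]
    · rw [min_eq_left h2.le, max_eq_left h1.le, sub_self, abs_zero]
      positivity
  have h1 : |(∫ ω, max (min (X ω) C) (-C) ∂ℙ) - μ|
      ≤ ∫ ω, 2 * (X ω - μ) ^ 2 / C ∂ℙ := by
    rw [← integral_sub hclip hXi]
    rw [← Real.norm_eq_abs]
    refine (norm_integral_le_integral_norm _).trans ?_
    simp only [Real.norm_eq_abs]
    exact integral_mono ((hclip.sub hXi).abs) (by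
      simpa [mul_div_assoc] using (hsq.const_mul 2).div_const C) fun ω => key (X ω)
  refine h1.trans ?_
  have : ∫ ω, 2 * (X ω - μ) ^ 2 / C ∂ℙ = 2 * (∫ ω, (X ω - μ) ^ 2 ∂ℙ) / C := by
    simp_rw [mul_div_assoc, integral_const_mul, integral_div]
  rw [this]
  have hv : variance X ℙ = ∫ ω, (X ω - μ) ^ 2 ∂ℙ := by
    rw [variance_eq_integral hX.aemeasurable]
  rw [hv]
end

section
/- Let eta > 0 and let c_1,...,c_T be vectors in R^n with c_t[i] >= -1/eta for all t and i. Define z_1 = (1,...,1) in R^n and z_{t+1}[i] = z_t[i] * exp(-eta * c_t[i]). Let p_t = z_t / ||z_t||_1. Then for every index i*, sum_{t=1}^T <p_t, c_t> <= sum_{t=1}^T c_t[i*] + (log n)/eta + eta * sum_{t=1}^T <p_t, c_t^2>, where c_t^2 denotes the coordinatewise square. -/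
lemma exp_le_quad {x : ℝ} (hx : x ≤ 1) : Real.exp x ≤ 1 + x + x ^ 2 := by
  rcases le_or_gt x (-1) with h | h
  · have h1 : Real.exp x ≤ 1 := Real.exp_le_one_iff.mpr (by linarith)
    nlinarith
  · have habs : |x| ≤ 1 := abs_le.mpr ⟨h.le, hx⟩
    have hb := Real.exp_bound habs (by norm_num : 0 < 3)
    have hsum : ∑ i ∈ Finset.range 3, x ^ i / i.factorial = 1 + x + x ^ 2 / 2 := by
      simp [Finset.sum_range_succ, Nat.factorial]
    rw [hsum] at hb
    have h3 : |x| ^ 3 ≤ x ^ 2 := by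
      have := pow_le_pow_of_le_one (abs_nonneg x) habs (by norm_num : 2 ≤ 3)
      rwa [sq_abs] at this
    have hb2 := (abs_le.mp hb).2
    norm_num [Nat.factorial] at hb2
    nlinarith

/-- Second-order regret bound for the exponentiated gradient (multiplicative weights)
update: with `z 0 = 1`, `z (t+1) i = z t i * exp (-η * c t i)`, `p t = z t / ‖z t‖₁`,
and `c t i ≥ -1/η`, for every index `i*`,
`∑ t, ⟪p t, c t⟫ ≤ ∑ t, c t i* + (log n)/η + η * ∑ t, ⟪p t, (c t)^2⟫`. -/
theorem stmt_8 (n T : ℕ) (hn : 0 < n) (η : ℝ) (hη : 0 < η)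
    (c : Fin T → Fin n → ℝ) (hc : ∀ t i, -1 / η ≤ c t i)
    (z : ℕ → Fin n → ℝ)
    (hz0 : ∀ i, z 0 i = 1)
    (hzs : ∀ t : Fin T, ∀ i, z (t + 1) i = z t i * Real.exp (-η * c t i))
    (p : Fin T → Fin n → ℝ)
    (hp : ∀ (t : Fin T) i, p t i = z t i / ∑ j, z t j)
    (istar : Fin n) :
    ∑ t, ∑ i, p t i * c t i
      ≤ ∑ t, c t istar + Real.log n / η + η * ∑ t, ∑ i, p t i * (c t i) ^ 2 := by
  have hne : Nonempty (Fin n) := Fin.pos_iff_nonempty.mp hn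
  set W : ℕ → ℝ := fun t => ∑ j, z t j with hW
  set S1 : Fin T → ℝ := fun t => ∑ i, p t i * c t i with hS1
  set S2 : Fin T → ℝ := fun t => ∑ i, p t i * (c t i) ^ 2 with hS2
  set g : ℕ → ℝ := fun s => if h : s < T then η ^ 2 * S2 ⟨s, h⟩ - η * S1 ⟨s, h⟩ else 0 with hg
  set cc : ℕ → ℝ := fun s => if h : s < T then c ⟨s, h⟩ istar else 0 with hcc
  have hzpos : ∀ t ≤ T, ∀ i, 0 < z t i := by
    intro t
    induction t with
    | zero => intro _ i; rw [hz0]; norm_num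
    | succ s ih =>
      intro ht i
      have hs : s < T := ht
      rw [hzs ⟨s, hs⟩ i]
      exact mul_pos (ih hs.le i) (Real.exp_pos _)
  have hWpos : ∀ t ≤ T, 0 < W t := fun t ht =>
    Finset.sum_pos (fun i _ => hzpos t ht i) Finset.univ_nonempty
  -- per-step moment bound
  have step : ∀ t : Fin T, W (t + 1) ≤ W t * Real.exp (η ^ 2 * S2 t - η * S1 t) := by
    intro t
    have hWt := hWpos t t.is_lt.le
    have hc1 : ∑ i, z t.1 i * c t i = W t * S1 t := by
      rw [hS1]
      simp only
      rw [Finset.mul_sum]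
      apply Finset.sum_congr rfl
      intro i _
      rw [hp t i]
      field_simp
      rw [mul_div_assoc, show W t / ∑ j, z t j = 1 from div_self hWt.ne', mul_one]
    have hc2 : ∑ i, z t.1 i * (c t i) ^ 2 = W t * S2 t := by
      rw [hS2]
      simp only
      rw [Finset.mul_sum]
      apply Finset.sum_congr rfl
      intro i _
      rw [hp t i]
      field_simp
      rw [mul_div_assoc, show W t / ∑ j, z t j = 1 from div_self hWt.ne', mul_one]
    have h1 : W (t + 1) ≤ ∑ i, z t.1 i * (1 + (-η * c t i) + (-η * c t i) ^ 2) := by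
      apply Finset.sum_le_sum
      intro i _
      rw [hzs t i]
      apply mul_le_mul_of_nonneg_left _ (hzpos t t.is_lt.le i).le
      apply exp_le_quad
      have h2 : -1 ≤ c t i * η := (div_le_iff₀ hη).mp (hc t i)
      nlinarith
    have h2 : ∑ i, z t.1 i * (1 + (-η * c t i) + (-η * c t i) ^ 2)
        = W t * (1 + (η ^ 2 * S2 t - η * S1 t)) := by
      have expand : ∀ i, z t.1 i * (1 + (-η * c t i) + (-η * c t i) ^ 2)
          = z t.1 i + (-η) * (z t.1 i * c t i) + η ^ 2 * (z t.1 i * (c t i) ^ 2) := by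
        intro i; ring
      simp only [expand]
      rw [Finset.sum_add_distrib, Finset.sum_add_distrib, ← Finset.mul_sum, ← Finset.mul_sum,
        hc1, hc2]
      ring
    have h3 : W t * (1 + (η ^ 2 * S2 t - η * S1 t))
        ≤ W t * Real.exp (η ^ 2 * S2 t - η * S1 t) := by
      apply mul_le_mul_of_nonneg_left _ hWt.le
      have := Real.add_one_le_exp (η ^ 2 * S2 t - η * S1 t)
      linarith
    calc W (t + 1) ≤ _ := h1
      _ = _ := h2
      _ ≤ _ := h3
  -- telescoping upper bound
  have tele : ∀ t ≤ T, W t ≤ n * Real.exp (∑ s ∈ Finset.range t, g s) := by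
    intro t
    induction t with
    | zero => intro _; simp [hW, hz0]
    | succ s ih =>
      intro ht
      have hs : s < T := ht
      calc W (s + 1) ≤ W s * Real.exp (η ^ 2 * S2 ⟨s, hs⟩ - η * S1 ⟨s, hs⟩) := step ⟨s, hs⟩
        _ ≤ (n * Real.exp (∑ u ∈ Finset.range s, g u))
              * Real.exp (η ^ 2 * S2 ⟨s, hs⟩ - η * S1 ⟨s, hs⟩) :=
            mul_le_mul_of_nonneg_right (ih hs.le) (Real.exp_pos _).le
        _ = n * Real.exp (∑ u ∈ Finset.range (s + 1), g u) := by
            rw [Finset.sum_range_succ, Real.exp_add, hg]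
            simp only [dif_pos hs]
            ring
  -- exact lower bound
  have lower : ∀ t ≤ T, z t istar = Real.exp (-η * ∑ s ∈ Finset.range t, cc s) := by
    intro t
    induction t with
    | zero => intro _; simp [hz0]
    | succ s ih =>
      intro ht
      have hs : s < T := ht
      rw [hzs ⟨s, hs⟩ istar, ih hs.le, ← Real.exp_add, Finset.sum_range_succ, hcc]
      simp only [dif_pos hs]
      ring_nf
  have hsingle : z T istar ≤ W T :=
    Finset.single_le_sum (fun i _ => (hzpos T le_rfl i).le) (Finset.mem_univ istar)
  have key : Real.exp (-η * ∑ s ∈ Finset.range T, cc s)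
      ≤ n * Real.exp (∑ s ∈ Finset.range T, g s) := by
    rw [← lower T le_rfl]
    exact hsingle.trans (tele T le_rfl)
  have hlog : -η * ∑ s ∈ Finset.range T, cc s
      ≤ Real.log n + ∑ s ∈ Finset.range T, g s := by
    have h1 := Real.log_le_log (Real.exp_pos _) key
    rw [Real.log_exp, Real.log_mul (by positivity) (Real.exp_ne_zero _), Real.log_exp] at h1
    exact h1
  have hA : ∑ s ∈ Finset.range T, cc s = ∑ t, c t istar := by
    rw [← Fin.sum_univ_eq_sum_range]
    apply Finset.sum_congr rfl
    intro i _
    simp [hcc, i.is_lt]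
  have hG : ∑ s ∈ Finset.range T, g s = η ^ 2 * (∑ t, S2 t) - η * (∑ t, S1 t) := by
    rw [← Fin.sum_univ_eq_sum_range, Finset.mul_sum, Finset.mul_sum, ← Finset.sum_sub_distrib]
    apply Finset.sum_congr rfl
    intro i _
    simp [hg, i.is_lt]
  rw [hA, hG] at hlog
  have hL : η * (Real.log n / η) = Real.log n := by field_simp
  show ∑ t, S1 t ≤ ∑ t, c t istar + Real.log ↑n / η + η * ∑ t, S2 t
  nlinarith [hlog, hL, hη]
end

section
/- Let w in R^d be nonzero with ||w||_1 <= B, x in R^d with ||x||_infty <= 1, and y real with |y| <= B. Let J be a random index with P(J = j) = |w_j| / ||w||_1, and define phi = (w_J / P(J)) * x_J - y. Then E[phi] = <w, x> - y and E[phi^2] <= 4B^2. -/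
open Finset

/-- Lasso-scenario inner product estimator: sampling index `j` with probability
`p j = |w j| / ‖w‖₁` and setting `φ = (w j / p j) * x j - y` gives an unbiased
estimator of `⟨w, x⟩ - y` whose second moment is at most `4 B^2`, whenever
`‖w‖₁ ≤ B`, `‖x‖∞ ≤ 1` and `|y| ≤ B`. -/
theorem stmt_13 (d : ℕ) (w x : Fin d → ℝ) (B y : ℝ)
    (hw : w ≠ 0) (hwB : ∑ j, |w j| ≤ B) (hx : ∀ i, |x i| ≤ 1) (hy : |y| ≤ B) :
    (∑ j, (|w j| / ∑ i, |w i|) *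
        ((w j / (|w j| / ∑ i, |w i|)) * x j - y)) = (∑ j, w j * x j) - y ∧
    (∑ j, (|w j| / ∑ i, |w i|) *
        ((w j / (|w j| / ∑ i, |w i|)) * x j - y) ^ 2) ≤ 4 * B ^ 2 := by
  set S := ∑ i, |w i| with hSdef
  have hS : 0 < S := by
    obtain ⟨j, hj⟩ : ∃ j, w j ≠ 0 := by
      by_contra h; push_neg at h; exact hw (funext h)
    exact Finset.sum_pos' (fun i _ => abs_nonneg _)
      ⟨j, Finset.mem_univ _, abs_pos.2 hj⟩
  have hsum : ∑ j, |w j| / S = 1 := by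
    rw [← Finset.sum_div, ← hSdef, div_self hS.ne']
  constructor
  · have key : ∀ j ∈ univ, (|w j| / S) * ((w j / (|w j| / S)) * x j - y)
        = w j * x j - (|w j| / S) * y := by
      intro j _
      by_cases h : w j = 0
      · simp [h]
      · have habs : |w j| ≠ 0 := abs_ne_zero.2 h
        field_simp
    rw [Finset.sum_congr rfl key, Finset.sum_sub_distrib, ← Finset.sum_mul, hsum]
    ring
  · have hB : S ≤ B := hwB
    have hbound : ∀ j ∈ univ, (|w j| / S) * ((w j / (|w j| / S)) * x j - y) ^ 2
        ≤ (|w j| / S) * (4 * B ^ 2) := by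
      intro j _
      by_cases h : w j = 0
      · simp [h]
      · have habs : 0 < |w j| := abs_pos.2 h
        have hp : 0 < |w j| / S := div_pos habs hS
        have hq : |w j / (|w j| / S)| = S := by
          rw [abs_div, abs_of_pos hp]
          field_simp
        have h1 : |(w j / (|w j| / S)) * x j| ≤ S := by
          rw [abs_mul, hq]
          calc S * |x j| ≤ S * 1 := by
                exact mul_le_mul_of_nonneg_left (hx j) hS.le
            _ = S := mul_one S
        have h2 : |(w j / (|w j| / S)) * x j - y| ≤ 2 * B := by
          calc |(w j / (|w j| / S)) * x j - y|
              ≤ |(w j / (|w j| / S)) * x j| + |y| := abs_sub _ _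
            _ ≤ S + B := add_le_add h1 hy
            _ ≤ B + B := add_le_add_left hB B
            _ = 2 * B := by ring
        have h3 : ((w j / (|w j| / S)) * x j - y) ^ 2 ≤ (2 * B) ^ 2 := by
          have := abs_le.mp h2
          exact sq_le_sq' this.1 this.2
        have h4 : (2 * B) ^ 2 = 4 * B ^ 2 := by ring
        exact mul_le_mul_of_nonneg_left (h4 ▸ h3) hp.le
    calc (∑ j, (|w j| / S) * ((w j / (|w j| / S)) * x j - y) ^ 2)
        ≤ ∑ j, (|w j| / S) * (4 * B ^ 2) := Finset.sum_le_sum hbound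
      _ = 4 * B ^ 2 := by rw [← Finset.sum_mul, hsum, one_mul]
end
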